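/- Let G be a graph. For every hypersphere representation of G with squared radius t < 1/2, every orthonormal representation p: V → ℝ^d of G, and every unit vector c ∈ ℝ^d with c not orthogonal to all vectors p(i), the inequality 2t + (∑_{i∈V} ⟨c,p(i)⟩²)^{−1} ≥ 1 holds. -/

import Mathlib

open scoped RealInnerProductSpace

def IsUnitDistRep {V : Type*} (G : SimpleGraph V) {d : ℕ}
    (u : V → EuclideanSpace ℝ (Fin d)) : Prop :=
  ∀ i j, G.Adj i j → ‖u i - u j‖ = 1

def IsHypersphereRep {V : Type*} (G : SimpleGraph V) {d : ℕ}
    (u : V → EuclideanSpace ℝ (Fin d)) (t : ℝ) : Prop :=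
  IsUnitDistRep G u ∧ ∀ i, ‖u i‖ ^ 2 = t

noncomputable def hypersphereNumber {V : Type*} (G : SimpleGraph V) : ℝ :=
  sInf {t | ∃ (d : ℕ) (u : V → EuclideanSpace ℝ (Fin d)), IsHypersphereRep G u t}

/-- An orthonormal representation of `G`: unit vectors, with vertices non-adjacent in `G`
mapped to orthogonal vectors. -/
def IsOrthonormalRep {V : Type*} (G : SimpleGraph V) {d : ℕ}
    (p : V → EuclideanSpace ℝ (Fin d)) : Prop :=
  (∀ i, ‖p i‖ = 1) ∧ ∀ i j, i ≠ j → ¬ G.Adj i j → ⟪p i, p j⟫ = 0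

/-!
Lift a hypersphere representation `u` of squared radius `t ≤ 1/2` one dimension up,
`q i = √2 (u i, √(1/2 - t))`: the `q i` are unit vectors, orthogonal along the edges of `G`,
and all at the same angle to the new axis `e`, with `⟪e, q i⟫² = 1 - 2t`. Since `p` is orthogonal
along the non-edges, the tensors `p i ⊗ q i` are orthonormal, and Bessel's inequality for
`c ⊗ e` gives `(1 - 2t) ∑ ⟪c, p i⟫² ≤ 1`.
-/

open scoped TensorProduct

section TensorBessel

variable {ι E F : Type*} [NormedAddCommGroup E] [InnerProductSpace ℝ E]
  [NormedAddCommGroup F] [InnerProductSpace ℝ F]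

theorem orthonormal_tmul {p : ι → E} {q : ι → F} (hp : ∀ i, ‖p i‖ = 1) (hq : ∀ i, ‖q i‖ = 1)
    (horth : Pairwise fun i j => ⟪p i, p j⟫ = 0 ∨ ⟪q i, q j⟫ = 0) :
    Orthonormal ℝ fun i => p i ⊗ₜ[ℝ] q i := by
  refine ⟨fun i => by simp [hp, hq], fun i j hij => ?_⟩
  rcases horth hij with h | h <;> simp [h]

theorem sum_inner_mul_inner_sq_le {p : ι → E} {q : ι → F} (hp : ∀ i, ‖p i‖ = 1)
    (hq : ∀ i, ‖q i‖ = 1) (horth : Pairwise fun i j => ⟪p i, p j⟫ = 0 ∨ ⟪q i, q j⟫ = 0)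
    (s : Finset ι) (c : E) (e : F) :
    ∑ i ∈ s, (⟪c, p i⟫ * ⟪e, q i⟫) ^ 2 ≤ ‖c‖ ^ 2 * ‖e‖ ^ 2 := by
  have hbessel := (orthonormal_tmul hp hq horth).sum_inner_products_le (c ⊗ₜ[ℝ] e) (s := s)
  simpa [real_inner_comm, mul_pow] using hbessel

end TensorBessel

section SphereLift

variable {V E : Type*} [NormedAddCommGroup E] [InnerProductSpace ℝ E]

noncomputable def sphereLift (u : V → E) (t : ℝ) (i : V) : WithLp 2 (E × ℝ) :=
  √2 • WithLp.toLp 2 (u i, √(1 / 2 - t))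

theorem inner_sphereLift (u : V → E) {t : ℝ} (ht : t ≤ 1 / 2) (i j : V) :
    ⟪sphereLift u t i, sphereLift u t j⟫ = 2 * ⟪u i, u j⟫ + 1 - 2 * t := by
  have h2 : √2 * √2 = 2 := Real.mul_self_sqrt zero_le_two
  have hs : √(1 / 2 - t) * √(1 / 2 - t) = 1 / 2 - t := Real.mul_self_sqrt (by linarith)
  rw [sphereLift, sphereLift, real_inner_smul_left, real_inner_smul_right,
    WithLp.prod_inner_apply, RCLike.inner_apply]
  simp only [conj_trivial]
  linear_combination (⟪u i, u j⟫ + √(1 / 2 - t) * √(1 / 2 - t)) * h2 + 2 * hs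

variable {u : V → E} {t : ℝ}

theorem norm_sphereLift (ht : t ≤ 1 / 2) {i : V} (hi : ‖u i‖ ^ 2 = t) :
    ‖sphereLift u t i‖ = 1 := by
  have h : ‖sphereLift u t i‖ ^ 2 = 1 ^ 2 := by
    rw [← real_inner_self_eq_norm_sq, inner_sphereLift u ht, real_inner_self_eq_norm_sq, hi]
    ring
  exact (pow_left_inj₀ (norm_nonneg _) zero_le_one two_ne_zero).1 h

theorem inner_sphereLift_eq_zero (ht : t ≤ 1 / 2) {i j : V} (hi : ‖u i‖ ^ 2 = t)
    (hj : ‖u j‖ ^ 2 = t) (hij : ‖u i - u j‖ = 1) :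
    ⟪sphereLift u t i, sphereLift u t j⟫ = 0 := by
  have hsub := norm_sub_sq_real (u i) (u j)
  rw [hij, hi, hj] at hsub
  rw [inner_sphereLift u ht]
  linarith

theorem inner_sphereLift_axis_sq (ht : t ≤ 1 / 2) (i : V) :
    ⟪(WithLp.toLp 2 (0, 1) : WithLp 2 (E × ℝ)), sphereLift u t i⟫ ^ 2 = 1 - 2 * t := by
  rw [sphereLift, real_inner_smul_right, WithLp.prod_inner_apply, RCLike.inner_apply]
  simp only [inner_zero_left, conj_trivial, zero_add, mul_one, mul_pow,
    Real.sq_sqrt zero_le_two, Real.sq_sqrt (sub_nonneg.2 ht)]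
  ring

end SphereLift

theorem hypersphere_orthonormal_minmax {V : Type*} [Fintype V] (G : SimpleGraph V)
    {m d : ℕ} {t : ℝ} (u : V → EuclideanSpace ℝ (Fin m))
    (hu : IsHypersphereRep G u t) (ht : t < 1 / 2)
    (p : V → EuclideanSpace ℝ (Fin d)) (hp : IsOrthonormalRep G p)
    (c : EuclideanSpace ℝ (Fin d)) (hc : ‖c‖ = 1) (hcp : ∃ i, ⟪c, p i⟫ ≠ 0) :
    2 * t + (∑ i, ⟪c, p i⟫ ^ 2)⁻¹ ≥ 1 := by
  obtain ⟨hdist, hnorm⟩ := hu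
  obtain ⟨hp_norm, hp_orth⟩ := hp
  have ht' : t ≤ 1 / 2 := ht.le
  have horth : Pairwise fun i j => ⟪p i, p j⟫ = 0 ∨ ⟪sphereLift u t i, sphereLift u t j⟫ = 0 := by
    intro i j hij
    by_cases hadj : G.Adj i j
    · exact .inr (inner_sphereLift_eq_zero ht' (hnorm i) (hnorm j) (hdist i j hadj))
    · exact .inl (hp_orth i j hij hadj)
  have hbessel : (∑ i, ⟪c, p i⟫ ^ 2) * (1 - 2 * t) ≤ 1 := by
    simpa only [mul_pow, inner_sphereLift_axis_sq ht', ← Finset.sum_mul, hc, WithLp.norm_toLp_snd,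
      norm_one, one_pow, mul_one] using
      sum_inner_mul_inner_sq_le hp_norm (fun i => norm_sphereLift ht' (hnorm i)) horth
        Finset.univ c (WithLp.toLp 2 (0, 1))
  have hS : 0 < ∑ i, ⟪c, p i⟫ ^ 2 := by
    obtain ⟨i, hi⟩ := hcp
    exact Finset.sum_pos' (fun j _ => sq_nonneg _) ⟨i, Finset.mem_univ i, by positivity⟩
  have hinv : 1 - 2 * t ≤ (∑ i, ⟪c, p i⟫ ^ 2)⁻¹ := by
    rw [← one_div, le_div_iff₀ hS]
    linarith
  linarith
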